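/- Let p, n, k ≥ 1 and let W ⊆ ℂⁿ be an open set such that every a = (a_1, …, a_n) ∈ W has pairwise distinct, nonzero coordinates. Let B_1, …, B_n and C_1, …, C_k be holomorphic maps from W to the p×p complex matrices. For a ∈ W and z ∈ ℂ \ {0, a_1, …, a_n} set A(a, z) = Σ_{l=1}^{k} C_l(a) · z^{-l} + Σ_{j=1}^{n} B_j(a) · (z − a_j)^{-1} and, for each i, A_i(a, z) = −B_i(a) · (z − a_i)^{-1}. Then the zero-curvature (integrability) conditions dω¹ = ω¹ ∧ ω¹ for the matrix 1-form ω¹ = A dz + Σ_i A_i da_i, namely: (F1) ∂A_i/∂z − ∂A/∂a_i = A·A_i − A_i·A for every i, and (F2) ∂A_j/∂a_i − ∂A_i/∂a_j = A_i·A_j − A_j·A_i for all i ≠ j, holding for all a ∈ W and all z ∈ ℂ \ {0, a_1, …, a_n}, are together equivalent to the following system holding on all of W: (E1) ∂B_i/∂a_j = [B_i, B_j]/(a_i − a_j) for all i ≠ j; (E2) Σ_{j=1}^{n} ∂B_i/∂a_j + ∂C_1/∂a_i = 0 for every i; (E3) ∂C_{l+1}/∂a_i − a_i · ∂C_l/∂a_i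 = −[B_i, C_l] for every i and every l = 1, …, k−1; (E4) a_i · ∂C_k/∂a_i = [B_i, C_k] for every i. -/

import Mathlib

open scoped BigOperators

/-- Entrywise partial derivative in the direction of the `i`-th coordinate
of a matrix-valued map on `ℂⁿ`. -/
noncomputable def pd {n p : ℕ} (i : Fin n)
    (f : (Fin n → ℂ) → Matrix (Fin p) (Fin p) ℂ) (a : Fin n → ℂ) :
    Matrix (Fin p) (Fin p) ℂ :=
  Matrix.of fun r c => fderiv ℂ (fun x => f x r c) a (Pi.single i 1)

/-- Entrywise derivative of a matrix-valued map of one complex variable. -/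
noncomputable def zd {p : ℕ}
    (f : ℂ → Matrix (Fin p) (Fin p) ℂ) (z : ℂ) :
    Matrix (Fin p) (Fin p) ℂ :=
  Matrix.of fun r c => deriv (fun w => f w r c) z

/-!
Multiplying the `(z, a_i)`-component of the curvature by `z - a_i` turns it into a rational
function `γ + Σ_m α_m z^{-m} + Σ_j β_j (z - a_j)^{-1}` whose coefficients are explicit in the
`B_j`, `C_l` and their derivatives. Such a function vanishes off its poles only if all its
coefficients vanish (clear denominators: the numerator polynomial has infinitely many roots, its
value at `a_j` is `β_j` times a nonzero number, and the rest is read off coefficientwise). The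
coefficients of `z^{-m}` give (E3) and (E4), the residue at `a_j` gives (E1) with `i` and `j`
exchanged, and the constant term gives `Σ_j ∂B_j/∂a_i + ∂C_1/∂a_i = 0`, which is (E2) because (E1)
makes `∂B_i/∂a_j = ∂B_j/∂a_i`. Conversely, the `(a_i, a_j)`-components hold as soon as (E1) does,
by `(z - a_i)⁻¹ (z - a_j)⁻¹ = (a_i - a_j)⁻¹ ((z - a_i)⁻¹ - (z - a_j)⁻¹)`.
-/

open Finset

theorem sum_Icc_one_eq_sum_range {M : Type*} [AddCommMonoid M] (k : ℕ) (f : ℕ → M) :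
    ∑ l ∈ Icc 1 k, f l = ∑ t ∈ range k, f (t + 1) := by
  rw [← Ico_add_one_right_eq_Icc, sum_Ico_eq_sum_range, Nat.add_sub_cancel]
  simp only [add_comm 1]

section PoleSum

variable {M N : Type*} [AddCommGroup M] [Module ℂ M] [AddCommGroup N] [Module ℂ N] {n k : ℕ}

-- The connection matrix `A a z` of the theorem is `poleSum k a (C · a) (B · a) z`.
noncomputable def poleSum (k : ℕ) (a : Fin n → ℂ) (α : ℕ → M) (β : Fin n → M) (z : ℂ) : M :=
  ∑ l ∈ Icc 1 k, (z ^ l)⁻¹ • α l + ∑ j, (z - a j)⁻¹ • β j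

theorem poleSum_add (a : Fin n → ℂ) (α α' : ℕ → M) (β β' : Fin n → M) (z : ℂ) :
    poleSum k a α β z + poleSum k a α' β' z
      = poleSum k a (fun l => α l + α' l) (fun j => β j + β' j) z := by
  simp only [poleSum, smul_add, sum_add_distrib]
  abel

theorem map_poleSum (f : M →ₗ[ℂ] N) (a : Fin n → ℂ) (α : ℕ → M) (β : Fin n → M) (z : ℂ) :
    f (poleSum k a α β z) = poleSum k a (fun l => f (α l)) (fun j => f (β j)) z := by
  simp only [poleSum, map_add, map_sum, map_smul]

theorem sub_smul_poleSum (hk : 1 ≤ k) {a : Fin n → ℂ} {z : ℂ} (hz : z ≠ 0)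
    (hza : ∀ j, z ≠ a j) (c : ℂ) (α : ℕ → M) (β : Fin n → M) :
    (z - c) • poleSum k a α β z
      = ((∑ j, β j) + α 1)
        + poleSum k a (fun m => (if m < k then α (m + 1) else 0) - c • α m)
            (fun j => (a j - c) • β j) z := by
  obtain ⟨k, rfl⟩ := Nat.exists_eq_add_of_le' hk
  have hpole : ∀ j, (z - c) • (z - a j)⁻¹ • β j = β j + (z - a j)⁻¹ • (a j - c) • β j := by
    intro j
    have : z - a j ≠ 0 := sub_ne_zero.2 (hza j)
    match_scalars
    field_simp
    ring
  have hzero : ∀ t, (z - c) • (z ^ (t + 1))⁻¹ • α (t + 1)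
      = (z ^ t)⁻¹ • α (t + 1) - (z ^ (t + 1))⁻¹ • c • α (t + 1) := by
    intro t
    match_scalars
    field_simp
    ring
  have hshift : ∑ t ∈ range k, (z ^ (t + 1))⁻¹ • (if t + 1 < k + 1 then α (t + 1 + 1) else 0)
      = ∑ t ∈ range k, (z ^ (t + 1))⁻¹ • α (t + 1 + 1) :=
    sum_congr rfl fun t ht => by rw [if_pos (by simpa using ht)]
  simp only [poleSum, sum_Icc_one_eq_sum_range, smul_add, smul_sum, hpole, hzero, smul_sub,
    sum_sub_distrib, sum_add_distrib, sum_range_succ' (fun t => (z ^ t)⁻¹ • α (t + 1)),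
    sum_range_succ (fun t => (z ^ (t + 1))⁻¹ • if t + 1 < k + 1 then α (t + 1 + 1) else 0)]
  rw [hshift, if_neg (lt_irrefl _), smul_zero, add_zero, pow_zero, inv_one, one_smul]
  abel

end PoleSum

section Numerator

open Polynomial

variable {n k : ℕ}

theorem coeff_eq_zero_of_C_mul_X_pow_add_sum_eq_zero {γ : ℂ} {α : ℕ → ℂ}
    (h : C γ * X ^ k + ∑ m ∈ Icc 1 k, C (α m) * X ^ (k - m) = 0) :
    γ = 0 ∧ ∀ m ∈ Icc 1 k, α m = 0 := by
  refine ⟨?_, fun m hm => ?_⟩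
  · have hcoeff := congrArg (coeff · k) h
    simp only [coeff_add, finsetSum_coeff, coeff_C_mul_X_pow, coeff_zero] at hcoeff
    rwa [if_pos trivial, sum_eq_zero fun m hm => if_neg (by have := mem_Icc.1 hm; omega),
      add_zero] at hcoeff
  · have hcoeff := congrArg (coeff · (k - m)) h
    have hm' := mem_Icc.1 hm
    simp only [coeff_add, finsetSum_coeff, coeff_C_mul_X_pow, coeff_zero] at hcoeff
    rwa [if_neg (by omega), zero_add, sum_eq_single m (fun m' hm' hne => if_neg (by
      have := mem_Icc.1 hm'; omega)) (fun h => absurd hm h), if_pos rfl] at hcoeff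

noncomputable def poleSumNumerator (k : ℕ) (a : Fin n → ℂ) (γ : ℂ) (α : ℕ → ℂ) (β : Fin n → ℂ) :
    ℂ[X] :=
  (C γ * X ^ k + ∑ m ∈ Icc 1 k, C (α m) * X ^ (k - m)) * ∏ j, (X - C (a j))
    + ∑ j, C (β j) * X ^ k * ∏ j' ∈ univ.erase j, (X - C (a j'))

theorem eval_poleSumNumerator {a : Fin n → ℂ} {z : ℂ} (hz : z ≠ 0) (hza : ∀ j, z ≠ a j)
    (γ : ℂ) (α : ℕ → ℂ) (β : Fin n → ℂ) :
    (poleSumNumerator k a γ α β).eval z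
      = z ^ k * (∏ j, (z - a j)) * (γ + poleSum k a α β z) := by
  have hzero : ∀ m ∈ Icc 1 k, z ^ (k - m) = z ^ k * (z ^ m)⁻¹ := fun m hm =>
    pow_sub₀ z hz (mem_Icc.1 hm).2
  have hpole : ∀ j, ∏ j' ∈ univ.erase j, (z - a j') = (z - a j)⁻¹ * ∏ j', (z - a j') := by
    intro j
    rw [← prod_erase_mul univ _ (mem_univ j), mul_comm,
      mul_inv_cancel_right₀ (sub_ne_zero.2 (hza j))]
  simp only [poleSumNumerator, poleSum, eval_add, eval_mul, eval_finsetSum, eval_prod, eval_sub,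
    eval_C, eval_pow, eval_X, smul_eq_mul, hpole]
  rw [sum_congr rfl fun m hm => by rw [hzero m hm]]
  simp only [add_mul, mul_add, sum_mul, mul_sum, add_assoc]
  congr 1
  · ring
  congr 1 <;> exact sum_congr rfl fun _ _ => by ring

theorem eval_poleSumNumerator_pole (a : Fin n → ℂ) (γ : ℂ) (α : ℕ → ℂ) (β : Fin n → ℂ)
    (j : Fin n) :
    (poleSumNumerator k a γ α β).eval (a j)
      = β j * a j ^ k * ∏ j' ∈ univ.erase j, (a j - a j') := by
  have hroot : ∏ j', (a j - a j') = 0 := prod_eq_zero (mem_univ j) (sub_self _)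
  simp only [poleSumNumerator, eval_add, eval_mul, eval_finsetSum, eval_prod, eval_sub,
    eval_C, eval_pow, eval_X, hroot, mul_zero, zero_add]
  refine sum_eq_single j (fun j' _ hj' => ?_) (fun h => absurd (mem_univ j) h)
  rw [prod_eq_zero (mem_erase.2 ⟨hj'.symm, mem_univ j⟩) (sub_self _), mul_zero]

theorem coeff_eq_zero_of_poleSumNumerator_eq_zero {a : Fin n → ℂ} (ha : Function.Injective a)
    (ha0 : ∀ j, a j ≠ 0) {γ : ℂ} {α : ℕ → ℂ} {β : Fin n → ℂ}
    (h : poleSumNumerator k a γ α β = 0) :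
    γ = 0 ∧ (∀ m ∈ Icc 1 k, α m = 0) ∧ ∀ j, β j = 0 := by
  have hβ : ∀ j, β j = 0 := by
    intro j
    have hprod : ∏ j' ∈ univ.erase j, (a j - a j') ≠ 0 :=
      prod_ne_zero_iff.2 fun j' hj' => sub_ne_zero.2 fun h => (mem_erase.1 hj').1 (ha h).symm
    simpa [eval_poleSumNumerator_pole, ha0 j, hprod] using congrArg (eval (a j)) h
  have hP : ∏ j, (X - C (a j)) ≠ 0 :=
    (monic_prod_of_monic _ _ fun j _ => monic_X_sub_C (a j)).ne_zero
  obtain ⟨hγ, hα⟩ := coeff_eq_zero_of_C_mul_X_pow_add_sum_eq_zero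
    (by simpa [poleSumNumerator, hβ, hP] using h)
  exact ⟨hγ, hα, hβ⟩

end Numerator

theorem poleSum_eq_zero_iff {M : Type*} [AddCommGroup M] [Module ℂ M] {n k : ℕ}
    {a : Fin n → ℂ} (ha : Function.Injective a) (ha0 : ∀ j, a j ≠ 0)
    {γ : M} {α : ℕ → M} {β : Fin n → M} :
    (∀ z, z ≠ 0 → (∀ j, z ≠ a j) → γ + poleSum k a α β z = 0)
      ↔ γ = 0 ∧ (∀ m ∈ Icc 1 k, α m = 0) ∧ ∀ j, β j = 0 := by
  constructor
  · intro h
    have hφ : ∀ φ : Module.Dual ℂ M,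
        φ γ = 0 ∧ (∀ m ∈ Icc 1 k, φ (α m) = 0) ∧ ∀ j, φ (β j) = 0 := by
      intro φ
      refine coeff_eq_zero_of_poleSumNumerator_eq_zero ha ha0
        (Polynomial.eq_zero_of_infinite_isRoot _ (Set.Infinite.mono ?_
          ((Set.finite_range a).insert 0).infinite_compl))
      intro z hz
      simp only [Set.mem_compl_iff, Set.mem_insert_iff, Set.mem_range, not_or, not_exists] at hz
      have hza : ∀ j, z ≠ a j := fun j hj => hz.2 j hj.symm
      simp only [Set.mem_ofPred_eq, Polynomial.IsRoot.def, eval_poleSumNumerator hz.1 hza,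
        ← map_poleSum, ← map_add, h z hz.1 hza, map_zero, mul_zero]
    have hdual := Module.forall_dual_apply_eq_zero_iff ℂ (V := M)
    exact ⟨(hdual γ).1 fun φ => (hφ φ).1, fun m hm => (hdual _).1 fun φ => (hφ φ).2.1 m hm,
      fun j => (hdual _).1 fun φ => (hφ φ).2.2 j⟩
  · rintro ⟨rfl, hα, hβ⟩ z - -
    simp only [poleSum, hβ, smul_zero, sum_const_zero, add_zero, zero_add]
    exact sum_eq_zero fun m hm => by rw [hα m hm, smul_zero]

theorem mul_neg_smul_sub_neg_smul_mul {R : Type*} [Ring R] [Algebra ℂ R] (X Y : R) (s : ℂ) :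
    X * -(s • Y) - -(s • Y) * X = s • (Y * X - X * Y) := by
  simp only [mul_neg, neg_mul, mul_smul_comm, smul_mul_assoc, smul_sub]
  abel

theorem neg_smul_mul_neg_smul_sub {R : Type*} [Ring R] [Algebra ℂ R] (X Y : R) (s u : ℂ) :
    -(s • X) * -(u • Y) - -(u • Y) * -(s • X) = (s * u) • (X * Y - Y * X) := by
  simp only [neg_mul_neg, smul_mul_assoc, mul_smul_comm, smul_smul, smul_sub, mul_comm u s]

theorem mul_poleSum_sub_poleSum_mul {R : Type*} [Ring R] [Algebra ℂ R] {n k : ℕ} (Y : R)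
    (a : Fin n → ℂ) (α : ℕ → R) (β : Fin n → R) (z : ℂ) :
    Y * poleSum k a α β z - poleSum k a α β z * Y
      = poleSum k a (fun l => Y * α l - α l * Y) (fun j => Y * β j - β j * Y) z :=
  map_poleSum (LinearMap.mulLeft ℂ Y - LinearMap.mulRight ℂ Y) a α β z

theorem forall_shift_sub_smul_add_eq_zero_iff {M : Type*} [AddCommGroup M] [Module ℂ M] {k : ℕ}
    (hk : 1 ≤ k) (c : ℂ) (D K : ℕ → M) :
    (∀ m ∈ Icc 1 k, (if m < k then D (m + 1) else 0) - c • D m + K m = 0)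
      ↔ (∀ l, 1 ≤ l → l < k → D (l + 1) - c • D l = -K l) ∧ c • D k = K k := by
  constructor
  · intro h
    refine ⟨fun l hl hlk => ?_, ?_⟩
    · have h_l := h l (mem_Icc.2 ⟨hl, hlk.le⟩)
      rwa [if_pos hlk, ← eq_neg_iff_add_eq_zero] at h_l
    · have h_k := h k (mem_Icc.2 ⟨hk, le_rfl⟩)
      rwa [if_neg (lt_irrefl k), zero_sub, neg_add_eq_zero] at h_k
  · rintro ⟨h_lt, h_k⟩ m hm
    obtain ⟨hm1, hmk⟩ := mem_Icc.1 hm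
    rcases hmk.lt_or_eq with hlt | rfl
    · rw [if_pos hlt, h_lt m hm1 hlt, neg_add_cancel]
    · rw [if_neg (lt_irrefl m), zero_sub, h_k, neg_add_cancel]

theorem forall_sub_smul_add_commutator_eq_zero_iff {R : Type*} [Ring R] [Algebra ℂ R] {n : ℕ}
    {a : Fin n → ℂ} (ha : Function.Injective a) (i : Fin n) (D Y : Fin n → R) :
    (∀ j, (a j - a i) • D j + (Y i * Y j - Y j * Y i) = 0)
      ↔ ∀ j, j ≠ i → D j = (a j - a i)⁻¹ • (Y j * Y i - Y i * Y j) := by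
  refine forall_congr' fun j => ?_
  rcases eq_or_ne j i with rfl | hji
  · simp
  · rw [eq_inv_smul_iff₀ (sub_ne_zero.2 (ha.ne hji)), ← neg_sub (Y j * Y i), add_neg_eq_zero]
    simp only [ne_eq, hji, not_false_eq_true, forall_const]

section Derivatives

variable {n p : ℕ}

theorem zd_neg_inv_sub_smul {c z : ℂ} (hz : z ≠ c) (F : Matrix (Fin p) (Fin p) ℂ) :
    zd (fun w => -((w - c)⁻¹ • F)) z = ((z - c) ^ 2)⁻¹ • F := by
  ext r s
  have h : HasDerivAt (fun w : ℂ => -((w - c)⁻¹ * F r s)) (-(-1 / (z - c) ^ 2 * F r s)) z :=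
    ((((hasDerivAt_id z).sub_const c).inv (sub_ne_zero.2 hz)).mul_const (F r s)).neg
  simp only [zd, Matrix.of_apply, Matrix.neg_apply, Matrix.smul_apply, smul_eq_mul, h.deriv]
  field_simp

theorem hasFDerivAt_inv_sub_apply {a : Fin n → ℂ} {z : ℂ} {j : Fin n} (hz : z ≠ a j) :
    HasFDerivAt (fun x : Fin n → ℂ => (z - x j)⁻¹)
      (((z - a j) ^ 2)⁻¹ • ContinuousLinearMap.proj (R := ℂ) (φ := fun _ : Fin n => ℂ) j) a := by
  have h := (hasDerivAt_inv (sub_ne_zero.2 hz)).comp_hasFDerivAt a <| (hasFDerivAt_const z a).sub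
    (ContinuousLinearMap.proj (R := ℂ) (φ := fun _ : Fin n => ℂ) j).hasFDerivAt
  rwa [zero_sub, smul_neg, neg_smul, neg_neg] at h

theorem pd_neg_inv_sub_smul_of_ne {a : Fin n → ℂ} {z : ℂ} {i j : Fin n} (hij : i ≠ j)
    (hz : z ≠ a j) {F : (Fin n → ℂ) → Matrix (Fin p) (Fin p) ℂ}
    (hF : ∀ r s, DifferentiableAt ℂ (fun x => F x r s) a) :
    pd i (fun x => -((z - x j)⁻¹ • F x)) a = -((z - a j)⁻¹ • pd i F a) := by
  ext r s
  have h := ((hasFDerivAt_inv_sub_apply hz).fun_mul (hF r s).hasFDerivAt).fun_neg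
  simp only [pd, Matrix.of_apply, Matrix.neg_apply, Matrix.smul_apply, smul_eq_mul, h.fderiv,
    neg_apply, add_apply, smul_apply, ContinuousLinearMap.proj_apply,
    Pi.single_eq_of_ne hij.symm, mul_zero, add_zero]

theorem pd_poleSum {k : ℕ} {a : Fin n → ℂ} {z : ℂ} (hza : ∀ j, z ≠ a j)
    {B : Fin n → (Fin n → ℂ) → Matrix (Fin p) (Fin p) ℂ}
    {C : ℕ → (Fin n → ℂ) → Matrix (Fin p) (Fin p) ℂ}
    (hB : ∀ j r s, DifferentiableAt ℂ (fun x => B j x r s) a)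
    (hC : ∀ l ∈ Icc 1 k, ∀ r s, DifferentiableAt ℂ (fun x => C l x r s) a) (i : Fin n) :
    pd i (fun x => poleSum k x (fun l => C l x) (fun j => B j x) z) a
      = poleSum k a (fun l => pd i (C l) a) (fun j => pd i (B j) a) z
        + ((z - a i) ^ 2)⁻¹ • B i a := by
  ext r s
  have h : HasFDerivAt (fun x => (∑ l ∈ Icc 1 k, (z ^ l)⁻¹ * C l x r s)
        + ∑ j, (z - x j)⁻¹ * B j x r s)
      ((∑ l ∈ Icc 1 k, (z ^ l)⁻¹ • fderiv ℂ (fun x => C l x r s) a)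
        + ∑ j, ((z - a j)⁻¹ • fderiv ℂ (fun x => B j x r s) a
            + B j a r s • ((z - a j) ^ 2)⁻¹ • ContinuousLinearMap.proj j)) a :=
    (HasFDerivAt.fun_sum fun l hl => (hC l hl r s).hasFDerivAt.const_mul _).add
      (HasFDerivAt.fun_sum fun j _ =>
        (hasFDerivAt_inv_sub_apply (hza j)).mul (hB j r s).hasFDerivAt)
  simp only [poleSum, pd, Matrix.of_apply, Matrix.add_apply, Matrix.sum_apply, Matrix.smul_apply,
    smul_eq_mul, h.fderiv, add_apply, FunLike.coe_sum, Finset.sum_apply, smul_apply,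
    ContinuousLinearMap.proj_apply, Pi.single_apply, sum_add_distrib, mul_ite, mul_one, mul_zero,
    sum_ite_eq', mem_univ, if_true]
  ring

end Derivatives

theorem zd_sub_pd_eq_commutator_iff {n p k : ℕ} (hk : 1 ≤ k) {a : Fin n → ℂ} {z : ℂ} (hz : z ≠ 0)
    (hza : ∀ j, z ≠ a j) {B : Fin n → (Fin n → ℂ) → Matrix (Fin p) (Fin p) ℂ}
    {C : ℕ → (Fin n → ℂ) → Matrix (Fin p) (Fin p) ℂ}
    (hB : ∀ j r s, DifferentiableAt ℂ (fun x => B j x r s) a)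
    (hC : ∀ l ∈ Icc 1 k, ∀ r s, DifferentiableAt ℂ (fun x => C l x r s) a) (i : Fin n) :
    zd (fun w => -((w - a i)⁻¹ • B i a)) z
        - pd i (fun x => poleSum k x (fun l => C l x) (fun j => B j x) z) a
      = poleSum k a (fun l => C l a) (fun j => B j a) z * -((z - a i)⁻¹ • B i a)
        - -((z - a i)⁻¹ • B i a) * poleSum k a (fun l => C l a) (fun j => B j a) z
    ↔ ((∑ j, pd i (B j) a) + pd i (C 1) a)
        + poleSum k a
          (fun m => (if m < k then pd i (C (m + 1)) a else 0) - a i • pd i (C m) a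
            + (B i a * C m a - C m a * B i a))
          (fun j => (a j - a i) • pd i (B j) a + (B i a * B j a - B j a * B i a)) z = 0 := by
  rw [zd_neg_inv_sub_smul (hza i), pd_poleSum hza hB hC, sub_add_cancel_right,
    mul_neg_smul_sub_neg_smul_mul, mul_poleSum_sub_poleSum_mul,
    eq_inv_smul_iff₀ (sub_ne_zero.2 (hza i)), smul_neg, neg_eq_iff_add_eq_zero,
    sub_smul_poleSum hk hz hza, add_assoc, poleSum_add]

theorem forall_zd_sub_pd_eq_commutator_iff {n p k : ℕ} (hk : 1 ≤ k) {a : Fin n → ℂ}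
    (ha : Function.Injective a) (ha0 : ∀ j, a j ≠ 0)
    {B : Fin n → (Fin n → ℂ) → Matrix (Fin p) (Fin p) ℂ}
    {C : ℕ → (Fin n → ℂ) → Matrix (Fin p) (Fin p) ℂ}
    (hB : ∀ j r s, DifferentiableAt ℂ (fun x => B j x r s) a)
    (hC : ∀ l ∈ Icc 1 k, ∀ r s, DifferentiableAt ℂ (fun x => C l x r s) a) (i : Fin n) :
    (∀ z : ℂ, z ≠ 0 → (∀ j, z ≠ a j) →
      zd (fun w => -((w - a i)⁻¹ • B i a)) z
          - pd i (fun x => poleSum k x (fun l => C l x) (fun j => B j x) z) a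
        = poleSum k a (fun l => C l a) (fun j => B j a) z * -((z - a i)⁻¹ • B i a)
          - -((z - a i)⁻¹ • B i a) * poleSum k a (fun l => C l a) (fun j => B j a) z)
    ↔ (∑ j, pd i (B j) a) + pd i (C 1) a = 0
      ∧ (∀ l, 1 ≤ l → l < k →
          pd i (C (l + 1)) a - a i • pd i (C l) a = -(B i a * C l a - C l a * B i a))
      ∧ a i • pd i (C k) a = B i a * C k a - C k a * B i a
      ∧ ∀ j, j ≠ i → pd i (B j) a = (a j - a i)⁻¹ • (B j a * B i a - B i a * B j a) := by
  rw [forall₃_congr fun z hz hza => zd_sub_pd_eq_commutator_iff hk hz hza hB hC i,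
    poleSum_eq_zero_iff ha ha0,
    forall_shift_sub_smul_add_eq_zero_iff hk (a i) (fun m => pd i (C m) a)
      (fun m => B i a * C m a - C m a * B i a),
    forall_sub_smul_add_commutator_eq_zero_iff ha i (fun j => pd i (B j) a) (fun j => B j a),
    and_assoc]

theorem pd_sub_pd_eq_commutator_of_schlesinger {n p : ℕ} {a : Fin n → ℂ} {z : ℂ} {i j : Fin n}
    (hne : i ≠ j) (ha : a i ≠ a j) (hzi : z ≠ a i) (hzj : z ≠ a j)
    {B : Fin n → (Fin n → ℂ) → Matrix (Fin p) (Fin p) ℂ}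
    (hBi : ∀ r s, DifferentiableAt ℂ (fun x => B i x r s) a)
    (hBj : ∀ r s, DifferentiableAt ℂ (fun x => B j x r s) a)
    (hBij : pd j (B i) a = (a i - a j)⁻¹ • (B i a * B j a - B j a * B i a))
    (hBji : pd i (B j) a = (a j - a i)⁻¹ • (B j a * B i a - B i a * B j a)) :
    pd i (fun x => -((z - x j)⁻¹ • B j x)) a - pd j (fun x => -((z - x i)⁻¹ • B i x)) a
      = -((z - a i)⁻¹ • B i a) * -((z - a j)⁻¹ • B j a)
        - -((z - a j)⁻¹ • B j a) * -((z - a i)⁻¹ • B i a) := by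
  rw [pd_neg_inv_sub_smul_of_ne hne hzj hBj, pd_neg_inv_sub_smul_of_ne hne.symm hzi hBi, hBji, hBij,
    neg_smul_mul_neg_smul_sub, ← neg_sub (B i a * B j a)]
  have := sub_ne_zero.2 ha
  have := sub_ne_zero.2 ha.symm
  have := sub_ne_zero.2 hzi
  have := sub_ne_zero.2 hzj
  match_scalars <;> field_simp <;> ring

theorem sum_pd_comm_of_schlesinger {n p : ℕ} {a : Fin n → ℂ}
    {B : Fin n → (Fin n → ℂ) → Matrix (Fin p) (Fin p) ℂ}
    (hE1 : ∀ i j, i ≠ j → pd j (B i) a = (a i - a j)⁻¹ • (B i a * B j a - B j a * B i a))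
    (i : Fin n) :
    ∑ j, pd j (B i) a = ∑ j, pd i (B j) a := by
  refine sum_congr rfl fun j _ => ?_
  rcases eq_or_ne j i with rfl | hji
  · rfl
  · rw [hE1 i j hji.symm, hE1 j i hji, ← neg_sub (a i) (a j), inv_neg, neg_smul, ← smul_neg,
      neg_sub]

theorem isomonodromic_deformation_equations_general
    {p n k : ℕ} (hk : 1 ≤ k)
    (W : Set (Fin n → ℂ)) (hWopen : IsOpen W)
    (hWdist : ∀ a ∈ W, Function.Injective a)
    (hWne : ∀ a ∈ W, ∀ i, a i ≠ 0)
    (B : Fin n → (Fin n → ℂ) → Matrix (Fin p) (Fin p) ℂ)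
    (C : ℕ → (Fin n → ℂ) → Matrix (Fin p) (Fin p) ℂ)
    (hB : ∀ i r c, DifferentiableOn ℂ (fun x => B i x r c) W)
    (hC : ∀ l ∈ Finset.Icc 1 k, ∀ r c, DifferentiableOn ℂ (fun x => C l x r c) W)
    (A : (Fin n → ℂ) → ℂ → Matrix (Fin p) (Fin p) ℂ)
    (hA : A = fun a z =>
      (∑ l ∈ Finset.Icc 1 k, (z ^ l)⁻¹ • C l a)
        + ∑ j : Fin n, (z - a j)⁻¹ • B j a)
    (Ai : Fin n → (Fin n → ℂ) → ℂ → Matrix (Fin p) (Fin p) ℂ)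
    (hAi : Ai = fun i a z => -((z - a i)⁻¹ • B i a)) :
    (∀ a ∈ W, ∀ z : ℂ, z ≠ 0 → (∀ j, z ≠ a j) →
        (∀ i : Fin n,
          zd (Ai i a) z - pd i (fun x => A x z) a
            = A a z * Ai i a z - Ai i a z * A a z)
        ∧ (∀ i j : Fin n, i ≠ j →
          pd i (fun x => Ai j x z) a - pd j (fun x => Ai i x z) a
            = Ai i a z * Ai j a z - Ai j a z * Ai i a z))
      ↔ (∀ a ∈ W,
        (∀ i j : Fin n, i ≠ j →
          pd j (B i) a = (a i - a j)⁻¹ • (B i a * B j a - B j a * B i a))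
        ∧ (∀ i : Fin n, (∑ j : Fin n, pd j (B i) a) + pd i (C 1) a = 0)
        ∧ (∀ i : Fin n, ∀ l, 1 ≤ l → l < k →
          pd i (C (l + 1)) a - a i • pd i (C l) a
            = -(B i a * C l a - C l a * B i a))
        ∧ (∀ i : Fin n, a i • pd i (C k) a = B i a * C k a - C k a * B i a)) := by
  subst hA hAi
  refine forall₂_congr fun a ha => ?_
  have hBa : ∀ j r s, DifferentiableAt ℂ (fun x => B j x r s) a :=
    fun j r s => (hB j r s).differentiableAt (hWopen.mem_nhds ha)
  have hCa : ∀ l ∈ Icc 1 k, ∀ r s, DifferentiableAt ℂ (fun x => C l x r s) a :=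
    fun l hl r s => (hC l hl r s).differentiableAt (hWopen.mem_nhds ha)
  have hF1 := fun i => forall_zd_sub_pd_eq_commutator_iff hk (hWdist a ha) (hWne a ha) hBa hCa i
  constructor
  · intro hF
    have h := fun i => (hF1 i).1 fun z hz hza => (hF z hz hza).1 i
    have hE1 : ∀ i j, i ≠ j → pd j (B i) a = (a i - a j)⁻¹ • (B i a * B j a - B j a * B i a) :=
      fun i j hij => (h j).2.2.2 i hij
    refine ⟨hE1, fun i => ?_, fun i => (h i).2.1, fun i => (h i).2.2.1⟩
    rw [sum_pd_comm_of_schlesinger hE1]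
    exact (h i).1
  · rintro ⟨hE1, hE2, hE3, hE4⟩ z hz hza
    refine ⟨fun i => (hF1 i).2 ⟨?_, hE3 i, hE4 i, fun j hji => hE1 j i hji⟩ z hz hza,
      fun i j hij => pd_sub_pd_eq_commutator_of_schlesinger hij ((hWdist a ha).ne hij)
        (hza i) (hza j) (hBa i) (hBa j) (hE1 i j hij) (hE1 j i hij.symm)⟩
    rw [← sum_pd_comm_of_schlesinger hE1]
    exact hE2 i

/-- Proposition 7: the zero-curvature (integrability) conditions
`dω¹ = ω¹ ∧ ω¹` for `ω¹ = A dz + Σ_i A_i da_i`, with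
`A(a,z) = Σ_{l=1}^k C_l(a) z^{-l} + Σ_j B_j(a) (z - a_j)^{-1}` and
`A_i(a,z) = -B_i(a) (z - a_i)^{-1}`, are equivalent to the modified
Schlesinger system (6)–(8) of the paper. -/
theorem isomonodromic_deformation_equations
    {p n k : ℕ} (hp : 1 ≤ p) (hn : 1 ≤ n) (hk : 1 ≤ k)
    (W : Set (Fin n → ℂ)) (hWopen : IsOpen W)
    (hWdist : ∀ a ∈ W, Function.Injective a)
    (hWne : ∀ a ∈ W, ∀ i, a i ≠ 0)
    (B : Fin n → (Fin n → ℂ) → Matrix (Fin p) (Fin p) ℂ)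
    (C : ℕ → (Fin n → ℂ) → Matrix (Fin p) (Fin p) ℂ)
    (hB : ∀ i r c, DifferentiableOn ℂ (fun x => B i x r c) W)
    (hC : ∀ l ∈ Finset.Icc 1 k, ∀ r c, DifferentiableOn ℂ (fun x => C l x r c) W)
    (A : (Fin n → ℂ) → ℂ → Matrix (Fin p) (Fin p) ℂ)
    (hA : A = fun a z =>
      (∑ l ∈ Finset.Icc 1 k, (z ^ l)⁻¹ • C l a)
        + ∑ j : Fin n, (z - a j)⁻¹ • B j a)
    (Ai : Fin n → (Fin n → ℂ) → ℂ → Matrix (Fin p) (Fin p) ℂ)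
    (hAi : Ai = fun i a z => -((z - a i)⁻¹ • B i a)) :
    (∀ a ∈ W, ∀ z : ℂ, z ≠ 0 → (∀ j, z ≠ a j) →
        (∀ i : Fin n,
          zd (Ai i a) z - pd i (fun x => A x z) a
            = A a z * Ai i a z - Ai i a z * A a z)
        ∧ (∀ i j : Fin n, i ≠ j →
          pd i (fun x => Ai j x z) a - pd j (fun x => Ai i x z) a
            = Ai i a z * Ai j a z - Ai j a z * Ai i a z))
      ↔ (∀ a ∈ W,
        (∀ i j : Fin n, i ≠ j →
          pd j (B i) a = (a i - a j)⁻¹ • (B i a * B j a - B j a * B i a))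
        ∧ (∀ i : Fin n, (∑ j : Fin n, pd j (B i) a) + pd i (C 1) a = 0)
        ∧ (∀ i : Fin n, ∀ l, 1 ≤ l → l < k →
          pd i (C (l + 1)) a - a i • pd i (C l) a
            = -(B i a * C l a - C l a * B i a))
        ∧ (∀ i : Fin n, a i • pd i (C k) a = B i a * C k a - C k a * B i a)) :=
  isomonodromic_deformation_equations_general hk W hWopen hWdist hWne B C hB hC A hA Ai hAi
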